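/- arXiv:2211.03182 — 2 statements merged into one kernel-verified Lean document; each statement's English description precedes it below -/
import Mathlib

section
/- Let λ, p₂, q, φ be as follows: λ ∈ ℂ, |λ| = 1, λ not a root of unity; p₂ = −1/2; q(t) = 1 + q₂t² + Σ_{k≥2} q_{2k} t^{2k} with q₂(λ+1)² = p₂(λ−1)²; φ normalized and symmetric. Then for any integer M ≥ 2 there exists a unique polynomial Δq(t) = Σ_{k=2}^{M} η_{2k} t^{2k} such that Λ_{2M}( [S_{q+Δq}(φ⁻,φ)] ) = 1. Moreover, if Λ_{2N}( [S_q(φ⁻,φ)] − 1 ) = 0 for some N < M, then Λ_{2N}(Δq) = 0. -/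
/- Common setup: formal power series in two commuting variables `z, z̄` over `ℂ`,
represented by their coefficient functions, together with the operators of
Treschev's linearizable billiard construction. -/

open scoped BigOperators

noncomputable section

namespace Treschev

/-- A formal power series `f = Σ_{j,k≥0} f_{j,k} z^j z̄^k`, given by its coefficients. -/
abbrev FPS : Type := ℕ → ℕ → ℂ

/-- A formal power series in one variable `t`, given by its coefficients. -/
abbrev OPS : Type := ℕ → ℂ

/-- Product of two formal power series (Cauchy product). -/
def fmul (f g : FPS) : FPS := fun j k =>
  ∑ a ∈ Finset.range (j + 1), ∑ b ∈ Finset.range (k + 1), f a b * g (j - a) (k - b)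

/-- The constant series `1`. -/
def oneF : FPS := fun j k => if j = 0 ∧ k = 0 then 1 else 0

/-- Powers of a formal power series. -/
def fpow (f : FPS) : ℕ → FPS
  | 0 => oneF
  | n + 1 => fmul f (fpow f n)

/-- Substitution of a two-variable series `u` with zero constant term into a
one-variable series `q` (the formula is the correct one whenever `u 0 0 = 0`). -/
def substOne (q : OPS) (u : FPS) : FPS := fun j k =>
  ∑ m ∈ Finset.range (j + k + 1), q m * fpow u m j k

/-- Substitution `F(u, v)` of two series with zero constant term into a two-variable
series `F` (the formula is the correct one whenever `u 0 0 = 0` and `v 0 0 = 0`). -/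
def subst2 (F : FPS) (u v : FPS) : FPS := fun j k =>
  ∑ m ∈ Finset.range (j + k + 1), ∑ n ∈ Finset.range (j + k + 1),
    F m n * fmul (fpow u m) (fpow v n) j k

/-- The Taylor series of `cos`. -/
def cosSeries : OPS := fun n => if n % 2 = 0 then (-1 : ℂ) ^ (n / 2) / (n.factorial : ℂ) else 0

/-- `(t₁ + t₂)/2` as a two-variable series. -/
def halfSum : FPS := fun j k =>
  if j = 1 ∧ k = 0 then (1 / 2 : ℂ) else if j = 0 ∧ k = 1 then (1 / 2 : ℂ) else 0

/-- `(t₁ − t₂)/2` as a two-variable series. -/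
def halfDiff : FPS := fun j k =>
  if j = 1 ∧ k = 0 then (1 / 2 : ℂ) else if j = 0 ∧ k = 1 then (-(1 / 2) : ℂ) else 0

/-- The generating function `S_q(t₁,t₂) = q((t₁+t₂)/2)·cos((t₁−t₂)/2)` as a
formal power series in `t₁, t₂`. -/
def Sq (q : OPS) : FPS := fmul (substOne q halfSum) (substOne cosSeries halfDiff)

/-- Formal partial derivative with respect to the first variable. -/
def d1 (f : FPS) : FPS := fun j k => ((j + 1 : ℕ) : ℂ) * f (j + 1) k

/-- Formal partial derivative with respect to the second variable. -/
def d2 (f : FPS) : FPS := fun j k => ((k + 1 : ℕ) : ℂ) * f j (k + 1)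

/-- `f⁺`, with `(f⁺)_{j,k} = λ^{j−k} f_{j,k}`. -/
def plus (l : ℂ) (f : FPS) : FPS := fun j k => l ^ ((j : ℤ) - (k : ℤ)) * f j k

/-- `f⁻`, with `(f⁻)_{j,k} = λ^{k−j} f_{j,k}`. -/
def minus (l : ℂ) (f : FPS) : FPS := fun j k => l ^ ((k : ℤ) - (j : ℤ)) * f j k

/-- `∇f = f⁻ − λ⁻¹ f`. -/
def nab (l : ℂ) (f : FPS) : FPS := minus l f - l⁻¹ • f

/-- `∇⁺f = f − λ f⁺`. -/
def nabPlus (l : ℂ) (f : FPS) : FPS := f - l • plus l f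

/-- The average `[f] = Σ_j f_{j,j} (z z̄)^j`. -/
def avg (f : FPS) : FPS := fun j k => if j = k then f j k else 0

/-- The projection `Π₊(f) = [z f]/z`. -/
def Pip (f : FPS) : FPS := fun j k => if k = j + 1 then f j k else 0

/-- The projection `Π(f) = [z̄ f]/z̄`. -/
def Pim (f : FPS) : FPS := fun j k => if j = k + 1 then f j k else 0

/-- `E⁺`, the partial inverse of `∇⁺`. -/
def Eplus (l : ℂ) (f : FPS) : FPS := fun j k =>
  if k = j + 1 then 0 else f j k / (1 - l ^ ((j : ℤ) - (k : ℤ) + 1))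

/-- `E`, the partial inverse of `∇`. -/
def Emin (l : ℂ) (f : FPS) : FPS := fun j k =>
  if j = k + 1 then 0 else f j k / (l ^ ((k : ℤ) - (j : ℤ)) - l⁻¹)

/-- `Ẽ`, with `Ẽ(f − f⁺) = f − [f]`. -/
def Etilde (l : ℂ) (f : FPS) : FPS := fun j k =>
  if j = k then 0 else f j k / (1 - l ^ ((j : ℤ) - (k : ℤ)))

/-- `f ∘ I`, where `I(z,z̄) = (z̄,z)`. -/
def swapI (f : FPS) : FPS := fun j k => f k j

/-- Multiplication by `z`. -/
def mulz (f : FPS) : FPS := fun j k => if j = 0 then 0 else f (j - 1) k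

/-- Multiplication by `z̄`. -/
def mulzbar (f : FPS) : FPS := fun j k => if k = 0 then 0 else f j (k - 1)

/-- Division by `z` (valid on series divisible by `z`). -/
def divz (f : FPS) : FPS := fun j k => f (j + 1) k

/-- Multiplicative inverse `1/h` (the geometric-series formula, which is the correct
inverse whenever `h 0 0 ≠ 0`). -/
def finv (h : FPS) : FPS := fun j k =>
  (h 0 0)⁻¹ * ∑ m ∈ Finset.range (j + k + 1),
    fpow (fun a b => if a = 0 ∧ b = 0 then 0 else -(h a b) * (h 0 0)⁻¹) m j k

/-- Quotient `f/h` of formal power series. -/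
def fdiv (f h : FPS) : FPS := fmul f (finv h)

/-- `ℰ(q,φ) = ∂₂S_q(φ⁻,φ) + ∂₁S_q(φ,φ⁺)`. -/
def Err (l : ℂ) (q : OPS) (φ : FPS) : FPS :=
  subst2 (d2 (Sq q)) (minus l φ) φ + subst2 (d1 (Sq q)) φ (plus l φ)

/-- `∂_φℰ(q,φ)(w) = ∂₁₂S_q(φ⁻,φ)w⁻ + ∂₂₂S_q(φ⁻,φ)w + ∂₁₁S_q(φ,φ⁺)w + ∂₁₂S_q(φ,φ⁺)w⁺`. -/
def dErr (l : ℂ) (q : OPS) (φ : FPS) (w : FPS) : FPS :=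
  fmul (subst2 (d1 (d2 (Sq q))) (minus l φ) φ) (minus l w)
    + fmul (subst2 (d2 (d2 (Sq q))) (minus l φ) φ) w
    + fmul (subst2 (d1 (d1 (Sq q))) φ (plus l φ)) w
    + fmul (subst2 (d1 (d2 (Sq q))) φ (plus l φ)) (plus l w)

/-- `h = ∂₁₂S_q(φ⁻,φ)·φ_z·φ_z⁻`. -/
def hFun (l : ℂ) (q : OPS) (φ : FPS) : FPS :=
  fmul (fmul (subst2 (d1 (d2 (Sq q))) (minus l φ) φ) (d1 φ)) (minus l (d1 φ))

/-- `ψ = −E⁺( ℰ(q,φ)·φ_z − Π₊(ℰ(q,φ)·φ_z) )`. -/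
def psiFun (l : ℂ) (q : OPS) (φ : FPS) : FPS :=
  -Eplus l (fmul (Err l q φ) (d1 φ) - Pip (fmul (Err l q φ) (d1 φ)))

/-- `w = φ_z·E( ψ/h − Π(ψ/h) )`. -/
def wFun (l : ℂ) (q : OPS) (φ : FPS) : FPS :=
  fmul (d1 φ)
    (Emin l (fdiv (psiFun l q φ) (hFun l q φ) - Pim (fdiv (psiFun l q φ) (hFun l q φ))))

/-- `κ = ∂₁₂S_q(φ⁻,φ)·(λ⁻¹ φ_z⁻ φ_z̄ − λ φ_z̄⁻ φ_z)`. -/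
def kappaFun (l : ℂ) (q : OPS) (φ : FPS) : FPS :=
  fmul (subst2 (d1 (d2 (Sq q))) (minus l φ) φ)
    (l⁻¹ • fmul (minus l (d1 φ)) (d2 φ) - l • fmul (minus l (d2 φ)) (d1 φ))

/-- `g = φ_z̄ / φ_z`. -/
def gFun (φ : FPS) : FPS := fdiv (d2 φ) (d1 φ)

/-- `R₁ = ( −[z̄·ℰ·φ_z̄] + [z̄·g·[z·ℰ·φ_z]/z] ) / ( λ·z·[κ] )`. -/
def R1Fun (l : ℂ) (q : OPS) (φ : FPS) : FPS :=
  l⁻¹ • fmul (finv (avg (kappaFun l q φ)))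
    (divz (-avg (mulzbar (fmul (Err l q φ) (d2 φ)))
      + avg (mulzbar (fmul (gFun φ) (divz (avg (mulz (fmul (Err l q φ) (d1 φ)))))))))

/-- `R₂ = (1/z)·[ z̄·ψ·(λ⁻¹g − λg⁻)·([κ]−κ)/(κ·[κ]) ]`. -/
def R2Fun (l : ℂ) (q : OPS) (φ : FPS) : FPS :=
  divz (avg (mulzbar
    (fmul (fmul (psiFun l q φ) (l⁻¹ • gFun φ - l • minus l (gFun φ)))
      (fmul (avg (kappaFun l q φ) - kappaFun l q φ)
        (finv (fmul (kappaFun l q φ) (avg (kappaFun l q φ))))))))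

/-- `R₃ = [z·∂_z(S_q(φ⁻,φ))]/z − ∇⁺( h·Π(ψ/h) )`. -/
def R3Fun (l : ℂ) (q : OPS) (φ : FPS) : FPS :=
  Pip (d1 (subst2 (Sq q) (minus l φ) φ))
    - nabPlus l (fmul (hFun l q φ) (Pim (fdiv (psiFun l q φ) (hFun l q φ))))

/-- `R₄ = ∂_z(ℰ(q,φ))·(w/φ_z) + R₃/φ_z`. -/
def R4Fun (l : ℂ) (q : OPS) (φ : FPS) : FPS :=
  fmul (d1 (Err l q φ)) (fdiv (wFun l q φ) (d1 φ)) + fdiv (R3Fun l q φ) (d1 φ)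

/-- `φ = z + z̄ + O₃`. -/
def normalized (φ : FPS) : Prop :=
  φ 0 0 = 0 ∧ φ 1 0 = 1 ∧ φ 0 1 = 1 ∧ φ 2 0 = 0 ∧ φ 1 1 = 0 ∧ φ 0 2 = 0

/-- The weighted norm `‖f‖_ρ = Σ_{j,k} |f_{j,k}| ρ^{j+k} ∈ [0,∞]`. -/
def wnorm (ρ : ℝ) (f : FPS) : ENNReal :=
  ∑' p : ℕ × ℕ, ENNReal.ofReal (‖f p.1 p.2‖ * ρ ^ (p.1 + p.2))

/-- `D(f) = Σ_{n≥1} n f_n (z z̄)^n` for a series in `z z̄`. -/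
def Dop (f : FPS) : FPS := fun j k => if j = k then (j : ℂ) * f j k else 0

/-- `D̄(f − f₀) = Σ_{n≥1} (f_n/n) (z z̄)^n` for a series in `z z̄`. -/
def Dbar (f : FPS) : FPS := fun j k => if j = k ∧ j ≠ 0 then f j k / (j : ℂ) else 0

/-- The constant part `f₀` of a series. -/
def constPart (f : FPS) : FPS := fun j k => if j = 0 ∧ k = 0 then f 0 0 else 0

/-- `ξ₀ = ((λ⁻¹+1)z + (λ+1)z̄)/2`. -/
def xi0 (l : ℂ) : FPS := fun a b =>
  if a = 1 ∧ b = 0 then (l⁻¹ + 1) / 2 else if a = 0 ∧ b = 1 then (l + 1) / 2 else 0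

end Treschev

/-!
The coefficient of `(z z̄)ⁿ` in `[S_r(φ⁻, φ)]` is linear in `r` and involves only `r₀, …, r_{2n}`,
and the coefficient of `t^{2n}` contributes `C(2n, n) (λ⁻¹ + 1)ⁿ (λ + 1)ⁿ / 4ⁿ ≠ 0` (as `λ ≠ -1`).
So for `n = 2, …, M` the equations `[S_{q+Δq}(φ⁻, φ)]_n = 0` form a lower triangular system in
`η₄, …, η_{2M}` with nonzero diagonal, solved uniquely by forward substitution. The equations for
`n = 0, 1` do not involve `Δq`: they hold because `q₀ = 1` and by the choice of `q₂`. If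
`[S_q(φ⁻, φ)] = 1` up to order `2N`, the first equations of the system are homogeneous, which
forces `η₄ = ⋯ = η_{2N} = 0`.
-/

section Triangular

variable {K : Type*} [Field K] (a : ℕ → ℕ → K) (b : ℕ → K) (s : ℕ)

def forwardSubst : ℕ → K
  | n => (b n - ∑ k ∈ (Finset.Ico s n).attach, forwardSubst k * a n k) / a n n
  termination_by n => n
  decreasing_by exact (Finset.mem_Ico.mp k.2).2

theorem forwardSubst_eq (n : ℕ) :
    forwardSubst a b s n = (b n - ∑ k ∈ Finset.Ico s n, forwardSubst a b s k * a n k) / a n n := by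
  rw [forwardSubst, Finset.sum_attach (Finset.Ico s n) fun k => forwardSubst a b s k * a n k]

theorem sum_forwardSubst {n : ℕ} (hsn : s ≤ n) (ha : a n n ≠ 0) :
    ∑ k ∈ Finset.Icc s n, forwardSubst a b s k * a n k = b n := by
  rw [← Finset.Ico_insert_right hsn, Finset.sum_insert (by simp), forwardSubst_eq,
    div_mul_cancel₀ _ ha, sub_add_cancel]

variable {a s} in
theorem eq_of_sum_triangular_eq {N : ℕ} (ha : ∀ n ∈ Finset.Icc s N, a n n ≠ 0) {x y : ℕ → K}
    (h : ∀ n ∈ Finset.Icc s N,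
      ∑ k ∈ Finset.Icc s n, x k * a n k = ∑ k ∈ Finset.Icc s n, y k * a n k) :
    ∀ n ∈ Finset.Icc s N, x n = y n := by
  intro n
  induction n using Nat.strong_induction_on with
  | _ n ih =>
    intro hn
    have hsn : s ≤ n := (Finset.mem_Icc.mp hn).1
    have hlower : ∑ k ∈ Finset.Ico s n, x k * a n k = ∑ k ∈ Finset.Ico s n, y k * a n k :=
      Finset.sum_congr rfl fun k hk => by
        obtain ⟨hsk, hkn⟩ := Finset.mem_Ico.mp hk
        rw [ih k hkn (Finset.mem_Icc.mpr ⟨hsk, hkn.le.trans (Finset.mem_Icc.mp hn).2⟩)]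
    have := h n hn
    rw [← Finset.Ico_insert_right hsn, Finset.sum_insert (by simp), Finset.sum_insert (by simp),
      hlower, add_left_inj] at this
    exact mul_right_cancel₀ (ha n hn) this

end Triangular

theorem sum_range_eq_sum_Icc_two_mul {M : Type*} [AddCommMonoid M] {f : ℕ → M}
    (hf : ∀ m, (Odd m ∨ m < 4) → f m = 0) (n : ℕ) :
    ∑ m ∈ Finset.range (2 * n + 1), f m = ∑ k ∈ Finset.Icc 2 n, f (2 * k) := by
  rw [← Finset.sum_image (g := (2 * ·)) (by intro _ _ _ _ h; simpa using h)]
  refine (Finset.sum_subset (fun m hm => ?_) fun m hm hm' => hf m ?_).symm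
  · obtain ⟨k, hk, rfl⟩ := Finset.mem_image.mp hm
    simp only [Finset.mem_Icc] at hk
    simp only [Finset.mem_range]; omega
  · rcases Nat.even_or_odd m with ⟨k, rfl⟩ | ho
    · refine Or.inr (by_contra fun h4 => hm' (Finset.mem_image.mpr ⟨k, ?_, by ring⟩))
      simp only [Finset.mem_range] at hm
      simp only [Finset.mem_Icc]; omega
    · exact Or.inl ho

namespace Treschev

theorem fmul_oneF_left (f : FPS) : fmul oneF f = f := by
  ext j k
  simp [fmul, oneF, ite_and, Finset.sum_ite_eq']

theorem fmul_oneF_right (f : FPS) : fmul f oneF = f := by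
  ext j k
  rw [fmul, Finset.sum_eq_single j (fun a ha hne => Finset.sum_eq_zero fun b _ => ?_) (by simp),
    Finset.sum_eq_single k (fun b hb hne => ?_) (by simp)]
  · simp [oneF]
  · simp only [Finset.mem_range] at hb
    simp [oneF, show k - b ≠ 0 by omega]
  · simp only [Finset.mem_range] at ha
    simp [oneF, show j - a ≠ 0 by omega]

theorem fpow_apply_of_lt {u : FPS} (hu : u 0 0 = 0) {m j k : ℕ} (h : j + k < m) :
    fpow u m j k = 0 := by
  induction m generalizing j k with
  | zero => omega
  | succ m ih =>
    rw [fpow, fmul]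
    refine Finset.sum_eq_zero fun a ha => Finset.sum_eq_zero fun b hb => ?_
    simp only [Finset.mem_range] at ha hb
    rcases Nat.eq_zero_or_pos (a + b) with h0 | hpos
    · obtain ⟨rfl, rfl⟩ : a = 0 ∧ b = 0 := by omega
      rw [hu, zero_mul]
    · rw [ih (by omega), mul_zero]

theorem fmul_apply_of_add_ne_one {u g : FPS} {j k : ℕ}
    (h : ∀ a ≤ j, ∀ b ≤ k, a + b ≠ 1 → u a b * g (j - a) (k - b) = 0) :
    fmul u g j k = (if 0 < j then u 1 0 * g (j - 1) k else 0)
      + (if 0 < k then u 0 1 * g j (k - 1) else 0) := by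
  have hterm : ∀ a ∈ Finset.range (j + 1), ∀ b ∈ Finset.range (k + 1),
      u a b * g (j - a) (k - b) = (if a = 1 ∧ b = 0 then u 1 0 * g (j - 1) k else 0)
        + (if a = 0 ∧ b = 1 then u 0 1 * g j (k - 1) else 0) := by
    intro a ha b hb
    simp only [Finset.mem_range] at ha hb
    by_cases hab : a + b = 1
    · rcases Nat.add_eq_one_iff.mp hab with ⟨rfl, rfl⟩ | ⟨rfl, rfl⟩ <;> simp
    · rw [h a (by omega) b (by omega) hab, if_neg (by omega), if_neg (by omega), add_zero]
  rw [fmul, Finset.sum_congr rfl fun a ha => Finset.sum_congr rfl (hterm a ha)]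
  simp [Finset.sum_add_distrib, ite_and, Finset.sum_ite_eq']

theorem fpow_apply_of_add_eq {u : FPS} (hu : u 0 0 = 0) {m j k : ℕ} (h : j + k = m) :
    fpow u m j k = (m.choose j : ℂ) * u 1 0 ^ j * u 0 1 ^ k := by
  induction m generalizing j k with
  | zero =>
    obtain ⟨rfl, rfl⟩ : j = 0 ∧ k = 0 := by omega
    simp [fpow, oneF]
  | succ m ih =>
    rw [fpow, fmul_apply_of_add_ne_one fun a _ b _ hab => ?_]
    · rcases j with _ | j <;> rcases k with _ | k
      · omega
      · rw [if_neg (lt_irrefl 0), if_pos k.succ_pos, Nat.add_sub_cancel,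
          ih (show 0 + k = m by omega)]
        simp [pow_succ']
      · obtain rfl : j = m := by omega
        rw [if_pos j.succ_pos, if_neg (lt_irrefl 0), Nat.add_sub_cancel, ih (add_zero j)]
        simp [pow_succ']
      · rw [if_pos j.succ_pos, if_pos k.succ_pos, Nat.add_sub_cancel, Nat.add_sub_cancel,
          ih (show j + (k + 1) = m by omega), ih (show j + 1 + k = m by omega),
          Nat.choose_succ_succ, Nat.cast_add]
        ring
    · rcases Nat.eq_zero_or_pos (a + b) with h0 | hpos
      · obtain ⟨rfl, rfl⟩ : a = 0 ∧ b = 0 := by omega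
        rw [hu, zero_mul]
      · rw [fpow_apply_of_lt hu (by omega), mul_zero]

theorem fpow_apply_of_add_ne {w : FPS} (hw : ∀ a b, a + b ≠ 1 → w a b = 0) {m j k : ℕ}
    (h : j + k ≠ m) : fpow w m j k = 0 := by
  induction m generalizing j k with
  | zero => rw [fpow, oneF, if_neg (by omega)]
  | succ m ih =>
    rw [fpow, fmul_apply_of_add_ne_one fun a _ b _ hab => by rw [hw a b hab, zero_mul]]
    have hleft : 0 < j → fpow w m (j - 1) k = 0 := fun _ => ih (by omega)
    have hright : 0 < k → fpow w m j (k - 1) = 0 := fun _ => ih (by omega)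
    split_ifs <;> simp_all

-- `fmul` is the product of `ℂ⟦X⟧⟦X⟧` in coordinates; `toPS` brings in the binomial theorem.
def toPS (f : FPS) : PowerSeries (PowerSeries ℂ) :=
  PowerSeries.mk fun j => PowerSeries.mk (f j)

@[simp]
theorem coeff_coeff_toPS (f : FPS) (j k : ℕ) :
    PowerSeries.coeff k (PowerSeries.coeff j (toPS f)) = f j k := by
  simp [toPS]

theorem toPS_fmul (f g : FPS) : toPS (fmul f g) = toPS f * toPS g := by
  ext j k
  rw [PowerSeries.coeff_mul, map_sum, Finset.Nat.sum_antidiagonal_eq_sum_range_succ_mk,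
    coeff_coeff_toPS, fmul]
  refine Finset.sum_congr rfl fun a _ => ?_
  rw [PowerSeries.coeff_mul, Finset.Nat.sum_antidiagonal_eq_sum_range_succ_mk]
  simp

theorem toPS_oneF : toPS oneF = 1 := by
  ext j k
  rw [coeff_coeff_toPS]
  rcases j with _ | j <;> simp [oneF, PowerSeries.coeff_one]

theorem toPS_fpow (f : FPS) (n : ℕ) : toPS (fpow f n) = toPS f ^ n := by
  induction n with
  | zero => exact toPS_oneF
  | succ n ih => rw [fpow, toPS_fmul, ih, pow_succ']

theorem fpow_add_apply (u v : FPS) (m j k : ℕ) :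
    fpow (u + v) m j k
      = ∑ i ∈ Finset.range (m + 1), (m.choose i : ℂ) * fmul (fpow u i) (fpow v (m - i)) j k := by
  have hadd : toPS (u + v) = toPS u + toPS v := by ext; simp
  have h := congrArg (fun F => PowerSeries.coeff k (PowerSeries.coeff j F))
    ((toPS_fpow (u + v) m).trans (by rw [hadd, add_pow]))
  simp only [coeff_coeff_toPS, map_sum] at h
  rw [h]
  refine Finset.sum_congr rfl fun i _ => ?_
  rw [← toPS_fpow, ← toPS_fpow, ← toPS_fmul, ← Nat.cast_comm, ← nsmul_eq_mul, map_nsmul,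
    map_nsmul, coeff_coeff_toPS, nsmul_eq_mul]

theorem substOne_apply_of_add_ne_one {w : FPS} (hw : ∀ a b, a + b ≠ 1 → w a b = 0) (q : OPS)
    (j k : ℕ) :
    substOne q w j k = q (j + k) * ((j + k).choose j : ℂ) * w 1 0 ^ j * w 0 1 ^ k := by
  rw [substOne, Finset.sum_eq_single (j + k)
    (fun m _ hm => by rw [fpow_apply_of_add_ne hw (Ne.symm hm), mul_zero]) (by simp),
    fpow_apply_of_add_eq (hw 0 0 (by simp)) rfl]
  ring

theorem halfSum_apply_of_add_ne_one (a b : ℕ) (h : a + b ≠ 1) : halfSum a b = 0 := by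
  rw [halfSum, if_neg (by omega), if_neg (by omega)]

theorem halfDiff_apply_of_add_ne_one (a b : ℕ) (h : a + b ≠ 1) : halfDiff a b = 0 := by
  rw [halfDiff, if_neg (by omega), if_neg (by omega)]

theorem substOne_halfSum (q : OPS) (j k : ℕ) :
    substOne q halfSum j k = q (j + k) * ((j + k).choose j : ℂ) / 2 ^ (j + k) := by
  have h10 : halfSum 1 0 = 2⁻¹ := by norm_num [halfSum]
  have h01 : halfSum 0 1 = 2⁻¹ := by norm_num [halfSum]
  rw [substOne_apply_of_add_ne_one halfSum_apply_of_add_ne_one, h10, h01, inv_pow, inv_pow, pow_add]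
  ring

theorem substOne_halfDiff (q : OPS) (j k : ℕ) :
    substOne q halfDiff j k
      = q (j + k) * ((j + k).choose j : ℂ) * (-1) ^ k / 2 ^ (j + k) := by
  rw [substOne_apply_of_add_ne_one halfDiff_apply_of_add_ne_one]
  have h10 : halfDiff 1 0 = 2⁻¹ := by norm_num [halfDiff]
  have h01 : halfDiff 0 1 = -1 * 2⁻¹ := by norm_num [halfDiff]
  rw [h10, h01, mul_pow, inv_pow, inv_pow, pow_add]
  ring

theorem Sq_apply_of_lt {r : OPS} {d : ℕ} (hr : ∀ m < d, r m = 0) {j k : ℕ} (h : j + k < d) :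
    Sq r j k = 0 := by
  rw [Sq, fmul]
  refine Finset.sum_eq_zero fun a ha => Finset.sum_eq_zero fun b hb => ?_
  simp only [Finset.mem_range] at ha hb
  rw [substOne_halfSum, hr (a + b) (by omega), zero_mul, zero_div, zero_mul]

def tPow (d : ℕ) : OPS := Pi.single d 1

theorem Sq_tPow_apply_of_add_eq {d j k : ℕ} (h : j + k = d) :
    Sq (tPow d) j k = (d.choose j : ℂ) / 2 ^ d := by
  rw [Sq, fmul, Finset.sum_eq_single j, Finset.sum_eq_single k]
  · simp [substOne_halfSum, substOne_halfDiff, tPow, h, cosSeries]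
  · intro b hb hne
    simp only [Finset.mem_range] at hb
    simp [substOne_halfSum, tPow, show j + b ≠ d by omega]
  · simp
  · intro a ha hne
    simp only [Finset.mem_range] at ha
    refine Finset.sum_eq_zero fun b hb => ?_
    simp only [Finset.mem_range] at hb
    simp [substOne_halfSum, tPow, show a + b ≠ d by omega]
  · simp

theorem Sq_tPow_zero : Sq (tPow 0) = substOne cosSeries halfDiff := by
  have h1 : substOne (tPow 0) halfSum = oneF := by
    ext j k
    rw [substOne_halfSum]
    rcases Nat.eq_zero_or_pos (j + k) with h | h
    · obtain ⟨rfl, rfl⟩ : j = 0 ∧ k = 0 := by omega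
      simp [tPow, oneF]
    · simp [tPow, oneF, show ¬(j = 0 ∧ k = 0) by omega]
  rw [Sq, h1, fmul_oneF_left]

theorem fmul_fpow_apply_of_lt {u v : FPS} (hu : u 0 0 = 0) (hv : v 0 0 = 0) {m n j k : ℕ}
    (h : j + k < m + n) : fmul (fpow u m) (fpow v n) j k = 0 := by
  refine Finset.sum_eq_zero fun a ha => Finset.sum_eq_zero fun b hb => ?_
  simp only [Finset.mem_range] at ha hb
  rcases Nat.lt_or_ge (a + b) m with h1 | h1
  · rw [fpow_apply_of_lt hu h1, zero_mul]
  · rw [fpow_apply_of_lt hv (by omega), mul_zero]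

theorem subst2_apply_of_lt {F u v : FPS} (hu : u 0 0 = 0) (hv : v 0 0 = 0) {d : ℕ}
    (hF : ∀ m n, m + n < d → F m n = 0) {j k : ℕ} (h : j + k < d) : subst2 F u v j k = 0 := by
  refine Finset.sum_eq_zero fun m _ => Finset.sum_eq_zero fun n _ => ?_
  rcases Nat.lt_or_ge (m + n) d with h1 | h1
  · rw [hF m n h1, zero_mul]
  · rw [fmul_fpow_apply_of_lt hu hv (by omega), mul_zero]

theorem subst2_Sq_tPow_apply_of_add_eq {u v : FPS} (hu : u 0 0 = 0) (hv : v 0 0 = 0)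
    {d j k : ℕ} (h : j + k = d) :
    subst2 (Sq (tPow d)) u v j k
      = (d.choose j : ℂ) * (u 1 0 + v 1 0) ^ j * (u 0 1 + v 0 1) ^ k / 2 ^ d := by
  have hinner : ∀ m ∈ Finset.range (j + k + 1),
      ∑ n ∈ Finset.range (j + k + 1), Sq (tPow d) m n * fmul (fpow u m) (fpow v n) j k
        = (d.choose m : ℂ) / 2 ^ d * fmul (fpow u m) (fpow v (d - m)) j k := by
    intro m hm
    simp only [Finset.mem_range] at hm
    rw [Finset.sum_eq_single (d - m), Sq_tPow_apply_of_add_eq (by omega)]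
    · intro n _ hne
      rcases Nat.lt_or_ge (m + n) d with h1 | h1
      · rw [Sq_apply_of_lt (fun i hi => by simp [tPow, hi.ne]) h1, zero_mul]
      · rw [fmul_fpow_apply_of_lt hu hv (by omega), mul_zero]
    · intro hn
      exact absurd (Finset.mem_range.mpr (by omega)) hn
  rw [subst2, Finset.sum_congr rfl hinner, h]
  simp_rw [div_mul_eq_mul_div]
  rw [← Finset.sum_div, ← fpow_add_apply, fpow_apply_of_add_eq (by simp [hu, hv]) h]
  rfl

def substSqCoeff (u v : FPS) (j k : ℕ) : OPS →ₗ[ℂ] ℂ where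
  toFun r := subst2 (Sq r) u v j k
  map_add' r s := by
    simp only [subst2, Sq, fmul, substOne, Pi.add_apply, add_mul, Finset.sum_add_distrib]
  map_smul' c r := by
    simp only [subst2, Sq, fmul, substOne, Pi.smul_apply, smul_eq_mul, Finset.mul_sum,
      Finset.sum_mul, mul_assoc, RingHom.id_apply]

section SubstSqCoeff

variable {u v : FPS} (hu : u 0 0 = 0) (hv : v 0 0 = 0)
include hu hv

theorem substSqCoeff_eq_zero {j k : ℕ} {r : OPS} (hr : ∀ m ≤ j + k, r m = 0) :
    substSqCoeff u v j k r = 0 :=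
  subst2_apply_of_lt hu hv (fun _ _ h => Sq_apply_of_lt (fun m hm => hr m (by omega)) h)
    (Nat.lt_succ_self _)

theorem substSqCoeff_eq_sum (j k : ℕ) (r : OPS) :
    substSqCoeff u v j k r
      = ∑ m ∈ Finset.range (j + k + 1), r m * substSqCoeff u v j k (tPow m) := by
  have htail : substSqCoeff u v j k (r - ∑ m ∈ Finset.range (j + k + 1), r m • tPow m) = 0 :=
    substSqCoeff_eq_zero hu hv fun i hi => by
      simp [tPow, Pi.single_apply, show i < j + k + 1 by omega]
  simpa [sub_eq_zero] using htail

theorem substSqCoeff_tPow_of_add_eq {j k d : ℕ} (h : j + k = d) :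
    substSqCoeff u v j k (tPow d)
      = (d.choose j : ℂ) * (u 1 0 + v 1 0) ^ j * (u 0 1 + v 0 1) ^ k / 2 ^ d :=
  subst2_Sq_tPow_apply_of_add_eq hu hv h

theorem substSqCoeff_zero_zero (r : OPS) : substSqCoeff u v 0 0 r = r 0 := by
  simp [substSqCoeff_eq_sum hu hv 0 0 r, substSqCoeff_tPow_of_add_eq hu hv rfl]

end SubstSqCoeff

theorem substSqCoeff_tPow_zero_one_one {u v : FPS} (hu : u 0 0 = 0) (hv : v 0 0 = 0) :
    substSqCoeff u v 1 1 (tPow 0)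
      = -(1 / 4) * (u 1 0 * u 0 1) + (1 / 4) * (u 0 1 * v 1 0 + u 1 0 * v 0 1)
        - (1 / 4) * (v 1 0 * v 0 1) := by
  have h22 : fmul (fpow u 2) (fpow v 2) 1 1 = 0 := fmul_fpow_apply_of_lt hu hv (by norm_num)
  have h20 : fmul (fpow u 2) (fpow v 0) 1 1 = 2 * (u 1 0 * u 0 1) := by
    rw [fpow, fmul_oneF_right, fpow_apply_of_add_eq hu (show 1 + 1 = 2 from rfl)]; norm_num; ring
  have h02 : fmul (fpow u 0) (fpow v 2) 1 1 = 2 * (v 1 0 * v 0 1) := by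
    rw [fpow, fmul_oneF_left, fpow_apply_of_add_eq hv (show 1 + 1 = 2 from rfl)]; norm_num; ring
  have h11 : fmul (fpow u 1) (fpow v 1) 1 1 = u 0 1 * v 1 0 + u 1 0 * v 0 1 := by
    simp [fmul, fpow, oneF, Finset.sum_range_succ, hu, hv]
  have h00 : fmul (fpow u 0) (fpow v 0) 1 1 = 0 := by simp [fpow, fmul_oneF_left, oneF]
  simp only [substSqCoeff, LinearMap.coe_mk, AddHom.coe_mk, subst2, Sq_tPow_zero,
    substOne_halfDiff, Finset.sum_range_succ, Finset.sum_range_zero]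
  norm_num [cosSeries, h22, h20, h02, h11, h00, Nat.factorial]
  ring

def avgCoeff (l : ℂ) (φ : FPS) (n : ℕ) : OPS →ₗ[ℂ] ℂ := substSqCoeff (minus l φ) φ n n

section AvgCoeff

variable {l : ℂ} {φ : FPS}

theorem minus_apply_zero_zero (h00 : φ 0 0 = 0) : minus l φ 0 0 = 0 := by
  simp [minus, h00]

theorem minus_apply_one_zero (h10 : φ 1 0 = 1) : minus l φ 1 0 = l⁻¹ := by
  simp [minus, h10]

theorem minus_apply_zero_one (h01 : φ 0 1 = 1) : minus l φ 0 1 = l := by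
  simp [minus, h01]

theorem avgCoeff_eq_sum_Icc (h00 : φ 0 0 = 0) {r : OPS} (hr : ∀ m, (Odd m ∨ m < 4) → r m = 0)
    (n : ℕ) :
    avgCoeff l φ n r = ∑ k ∈ Finset.Icc 2 n, r (2 * k) * avgCoeff l φ n (tPow (2 * k)) := by
  rw [avgCoeff, substSqCoeff_eq_sum (minus_apply_zero_zero h00) h00, ← two_mul]
  exact sum_range_eq_sum_Icc_two_mul (fun m hm => by rw [hr m hm, zero_mul]) n

variable (h00 : φ 0 0 = 0) (h10 : φ 1 0 = 1) (h01 : φ 0 1 = 1)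
include h00 h10 h01

theorem avgCoeff_tPow_two_mul_self (n : ℕ) :
    avgCoeff l φ n (tPow (2 * n))
      = ((2 * n).choose n : ℂ) * (l⁻¹ + 1) ^ n * (l + 1) ^ n / 2 ^ (2 * n) := by
  rw [avgCoeff, substSqCoeff_tPow_of_add_eq (minus_apply_zero_zero h00) h00 (two_mul n).symm]
  rw [minus_apply_one_zero h10, minus_apply_zero_one h01, h10, h01]

theorem avgCoeff_tPow_two_mul_self_ne_zero (hl : l ≠ -1) (n : ℕ) :
    avgCoeff l φ n (tPow (2 * n)) ≠ 0 := by
  have hl' : l + 1 ≠ 0 := fun h => hl (eq_neg_of_add_eq_zero_left h)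
  have hinv : l⁻¹ + 1 ≠ 0 := fun h => hl (by
    rw [← inv_inv l, eq_neg_of_add_eq_zero_left h, inv_neg, inv_one])
  rw [avgCoeff_tPow_two_mul_self h00 h10 h01]
  refine div_ne_zero (mul_ne_zero (mul_ne_zero ?_ (pow_ne_zero _ hinv)) (pow_ne_zero _ hl'))
    (pow_ne_zero _ two_ne_zero)
  exact_mod_cast (Nat.choose_pos (by omega)).ne'

theorem avgCoeff_one_eq_zero (hl : l ≠ 0) {q : OPS} (hq0 : q 0 = 1) (hq1 : q 1 = 0)
    (hq2 : q 2 * (l + 1) ^ 2 = (-(1 / 2) : ℂ) * (l - 1) ^ 2) :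
    avgCoeff l φ 1 q = 0 := by
  have hm00 := minus_apply_zero_zero (l := l) h00
  have h0 : avgCoeff l φ 1 (tPow 0) = (l - 1) ^ 2 / (4 * l) := by
    rw [avgCoeff, substSqCoeff_tPow_zero_one_one hm00 h00]
    rw [minus_apply_one_zero h10, minus_apply_zero_one h01, h10, h01]
    field_simp
    ring
  have h2 : avgCoeff l φ 1 (tPow 2) = (l + 1) ^ 2 / (2 * l) := by
    rw [avgCoeff_tPow_two_mul_self h00 h10 h01 1]
    norm_num [Nat.choose]
    field_simp
    ring
  rw [avgCoeff, substSqCoeff_eq_sum hm00 h00, ← avgCoeff]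
  norm_num [Finset.sum_range_succ, hq0, hq1, h0, h2]
  field_simp
  linear_combination (4 : ℂ) * hq2

end AvgCoeff

theorem eq_zero_of_two_mul_eq_zero {r : OPS} (hr : ∀ m, (Odd m ∨ m < 4) → r m = 0) {N : ℕ}
    (hN : ∀ k ∈ Finset.Icc 2 N, r (2 * k) = 0) {m : ℕ} (hm : m ≤ 2 * N) : r m = 0 := by
  rcases Nat.even_or_odd m with ⟨k, rfl⟩ | ho
  · by_cases hk : k < 2
    · exact hr _ (Or.inr (by omega))
    · simpa [two_mul] using hN k (Finset.mem_Icc.mpr ⟨by omega, by omega⟩)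
  · exact hr m (Or.inl ho)

def IsCorrection (M : ℕ) (r : OPS) : Prop := ∀ m : ℕ, (Odd m ∨ m < 4 ∨ 2 * M < m) → r m = 0

def correctionOf (M : ℕ) (x : ℕ → ℂ) : OPS :=
  fun m => if Even m ∧ 4 ≤ m ∧ m ≤ 2 * M then x (m / 2) else 0

namespace IsCorrection

variable {M : ℕ} {r s : OPS}

theorem apply_eq_zero (hr : IsCorrection M r) {m : ℕ} (hm : Odd m ∨ m < 4) : r m = 0 :=
  hr m (by tauto)

theorem ext (hr : IsCorrection M r) (hs : IsCorrection M s)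
    (h : ∀ k ∈ Finset.Icc 2 M, r (2 * k) = s (2 * k)) : r = s := by
  funext m
  by_cases hm : 2 * M < m
  · rw [hr m (Or.inr (Or.inr hm)), hs m (Or.inr (Or.inr hm))]
  · refine sub_eq_zero.mp (eq_zero_of_two_mul_eq_zero (r := r - s) (fun m hm => ?_)
      (fun k hk => sub_eq_zero.mpr (h k hk)) (not_lt.mp hm))
    rw [Pi.sub_apply, hr.apply_eq_zero hm, hs.apply_eq_zero hm, sub_zero]

end IsCorrection

theorem isCorrection_correctionOf (M : ℕ) (x : ℕ → ℂ) : IsCorrection M (correctionOf M x) := by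
  intro m hm
  rw [correctionOf, if_neg]
  rintro ⟨he, h4, hM⟩
  rcases hm with ho | h | h
  · exact Nat.not_even_iff_odd.mpr ho he
  all_goals omega

theorem correctionOf_two_mul {M : ℕ} (x : ℕ → ℂ) {k : ℕ} (hk : k ∈ Finset.Icc 2 M) :
    correctionOf M x (2 * k) = x k := by
  simp only [Finset.mem_Icc] at hk
  rw [correctionOf, if_pos ⟨even_two_mul k, by omega, by omega⟩, Nat.mul_div_cancel_left k two_pos]

section TriangularCorrection

variable {c : ℕ → ℕ → ℂ} (hc : ∀ n, c n n ≠ 0)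
include hc

theorem existsUnique_correction (b : ℕ → ℂ) (M : ℕ) :
    ∃! r : OPS, IsCorrection M r ∧
      ∀ n ∈ Finset.Icc 2 M, ∑ k ∈ Finset.Icc 2 n, r (2 * k) * c n k = b n := by
  set x := forwardSubst c b 2
  have hx (n) (hn : n ∈ Finset.Icc 2 M) : ∑ k ∈ Finset.Icc 2 n, x k * c n k = b n :=
    sum_forwardSubst c b 2 (Finset.mem_Icc.mp hn).1 (hc n)
  refine ⟨correctionOf M x, ⟨isCorrection_correctionOf M x, fun n hn => ?_⟩, ?_⟩
  · rw [← hx n hn]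
    refine Finset.sum_congr rfl fun k hk => ?_
    rw [correctionOf_two_mul x (Finset.Icc_subset_Icc_right (Finset.mem_Icc.mp hn).2 hk)]
  · rintro r ⟨hr, hsys⟩
    refine hr.ext (isCorrection_correctionOf M x) fun k hk => ?_
    rw [correctionOf_two_mul x hk]
    exact eq_of_sum_triangular_eq (fun n _ => hc n)
      (fun n hn => (hsys n hn).trans (hx n hn).symm) k hk

theorem IsCorrection.eq_zero_of_sum_eq_zero {M N : ℕ} {r : OPS} (hr : IsCorrection M r)
    (hsys : ∀ n ∈ Finset.Icc 2 N, ∑ k ∈ Finset.Icc 2 n, r (2 * k) * c n k = 0) {m : ℕ}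
    (hm : m ≤ 2 * N) : r m = 0 :=
  eq_zero_of_two_mul_eq_zero (fun _ => hr.apply_eq_zero)
    (eq_of_sum_triangular_eq (x := fun k => r (2 * k)) (y := 0) (fun n _ => hc n)
      (fun n hn => by simpa using hsys n hn)) hm

end TriangularCorrection

theorem forall_avg_eq_oneF_iff (F : FPS) (M : ℕ) :
    (∀ j k, j + k ≤ 2 * M → avg F j k = oneF j k) ↔ ∀ n ≤ M, F n n = oneF n n := by
  refine ⟨fun h n hn => by simpa [avg] using h n n (by omega), fun h j k hjk => ?_⟩
  by_cases hjk' : j = k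
  · subst hjk'
    simpa [avg] using h j (by omega)
  · rw [avg, if_neg hjk', oneF, if_neg (by omega)]

section OuterEquation

variable {l : ℂ} {φ : FPS} {q : OPS}

theorem avgCoeff_eq_zero_of_forall_avg_eq_oneF {N : ℕ}
    (h : ∀ j k, j + k ≤ 2 * N → avg (subst2 (Sq q) (minus l φ) φ) j k = oneF j k) {n : ℕ}
    (hn : n ∈ Finset.Icc 2 N) : avgCoeff l φ n q = 0 := by
  obtain ⟨h2n, hnN⟩ := Finset.mem_Icc.mp hn
  have := (forall_avg_eq_oneF_iff _ N).1 h n hnN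
  rwa [oneF, if_neg (by omega)] at this

theorem outer_equation_iff (h00 : φ 0 0 = 0) {Δq : OPS} (hq0 : q 0 = 1)
    (hq1 : avgCoeff l φ 1 q = 0) (hΔq : ∀ m, (Odd m ∨ m < 4) → Δq m = 0) (M : ℕ) :
    (∀ j k, j + k ≤ 2 * M → avg (subst2 (Sq (q + Δq)) (minus l φ) φ) j k = oneF j k) ↔
      ∀ n ∈ Finset.Icc 2 M,
        ∑ k ∈ Finset.Icc 2 n, Δq (2 * k) * avgCoeff l φ n (tPow (2 * k)) = -avgCoeff l φ n q := by
  have hcoeff (n : ℕ) : subst2 (Sq (q + Δq)) (minus l φ) φ n n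
      = avgCoeff l φ n q + ∑ k ∈ Finset.Icc 2 n, Δq (2 * k) * avgCoeff l φ n (tPow (2 * k)) := by
    rw [← avgCoeff_eq_sum_Icc h00 hΔq n, ← map_add]
    rfl
  rw [forall_avg_eq_oneF_iff]
  refine ⟨fun h n hn => ?_, fun h n hn => ?_⟩
  · obtain ⟨h2n, hnM⟩ := Finset.mem_Icc.mp hn
    have := h n hnM
    rw [hcoeff, oneF, if_neg (by omega)] at this
    linear_combination this
  · rw [hcoeff]
    rcases n with _ | _ | n
    · simp [avgCoeff, substSqCoeff_zero_zero (minus_apply_zero_zero h00) h00, hq0, oneF]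
    · simp [hq1, oneF]
    · rw [h (n + 2) (Finset.mem_Icc.mpr ⟨by omega, hn⟩), add_neg_cancel]
      simp [oneF]

end OuterEquation

theorem truncated_outer_equation_general
    (l : ℂ) (hl : ‖l‖ = 1) (hru : ∀ n : ℕ, 0 < n → l ^ n ≠ 1)
    (q : OPS) (hq0 : q 0 = 1) (hqe : ∀ m : ℕ, Odd m → q m = 0)
    (hq2 : q 2 * (l + 1) ^ 2 = (-(1 / 2) : ℂ) * (l - 1) ^ 2)
    (φ : FPS) (hφ : normalized φ)
    (M : ℕ) :
    (∃! Δq : OPS,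
      (∀ m : ℕ, (Odd m ∨ m < 4 ∨ 2 * M < m) → Δq m = 0) ∧
      (∀ j k : ℕ, j + k ≤ 2 * M →
        avg (subst2 (Sq (q + Δq)) (minus l φ) φ) j k = oneF j k)) ∧
    (∀ Δq : OPS,
      ((∀ m : ℕ, (Odd m ∨ m < 4 ∨ 2 * M < m) → Δq m = 0) ∧
        (∀ j k : ℕ, j + k ≤ 2 * M →
          avg (subst2 (Sq (q + Δq)) (minus l φ) φ) j k = oneF j k)) →
      ∀ N : ℕ, N < M →
        (∀ j k : ℕ, j + k ≤ 2 * N →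
          avg (subst2 (Sq q) (minus l φ) φ) j k = oneF j k) →
        ∀ m : ℕ, m ≤ 2 * N → Δq m = 0) := by
  obtain ⟨h00, h10, h01, -⟩ := hφ
  have hl0 : l ≠ 0 := by rintro rfl; simp at hl
  have hl1 : l ≠ -1 := by rintro rfl; exact hru 2 two_pos (by norm_num)
  have hq1 := avgCoeff_one_eq_zero h00 h10 h01 hl0 hq0 (hqe 1 odd_one) hq2
  let c (n k : ℕ) : ℂ := avgCoeff l φ n (tPow (2 * k))
  have hc (n : ℕ) : c n n ≠ 0 := avgCoeff_tPow_two_mul_self_ne_zero h00 h10 h01 hl1 n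
  have hiff (Δq : OPS) (hΔq : IsCorrection M Δq) :=
    outer_equation_iff h00 hq0 hq1 (fun _ => hΔq.apply_eq_zero) M
  constructor
  · obtain ⟨Δq, ⟨hΔq, hsys⟩, huniq⟩ := existsUnique_correction hc (fun n => -avgCoeff l φ n q) M
    exact ⟨Δq, ⟨hΔq, (hiff Δq hΔq).2 hsys⟩,
      fun Δq' ⟨hΔq', heq⟩ => huniq Δq' ⟨hΔq', (hiff Δq' hΔq').1 heq⟩⟩
  · rintro Δq ⟨hΔq, heq⟩ N hNM hqN m hm
    refine IsCorrection.eq_zero_of_sum_eq_zero hc hΔq (fun n hn => ?_) hm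
    have hnM : n ∈ Finset.Icc 2 M := Finset.Icc_subset_Icc_right hNM.le hn
    rw [(hiff Δq hΔq).1 heq n hnM, avgCoeff_eq_zero_of_forall_avg_eq_oneF hqN hn, neg_zero]

/-- For every `M ≥ 2` there is a unique polynomial
`Δq(t) = Σ_{k=2}^{M} η_{2k} t^{2k}` with `Λ_{2M}([S_{q+Δq}(φ⁻,φ)]) = 1`; moreover if
`Λ_{2N}([S_q(φ⁻,φ)] − 1) = 0` for some `N < M` then `Λ_{2N}(Δq) = 0`. -/
theorem truncated_outer_equation
    (l : ℂ) (hl : ‖l‖ = 1) (hru : ∀ n : ℕ, 0 < n → l ^ n ≠ 1)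
    (q : OPS) (hq0 : q 0 = 1) (hqe : ∀ m : ℕ, Odd m → q m = 0)
    (hq2 : q 2 * (l + 1) ^ 2 = (-(1 / 2) : ℂ) * (l - 1) ^ 2)
    (φ : FPS) (hφ : normalized φ) (hsym : swapI φ = φ)
    (M : ℕ) (hM : 2 ≤ M) :
    (∃! Δq : OPS,
      (∀ m : ℕ, (Odd m ∨ m < 4 ∨ 2 * M < m) → Δq m = 0) ∧
      (∀ j k : ℕ, j + k ≤ 2 * M →
        avg (subst2 (Sq (q + Δq)) (minus l φ) φ) j k = oneF j k)) ∧
    (∀ Δq : OPS,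
      ((∀ m : ℕ, (Odd m ∨ m < 4 ∨ 2 * M < m) → Δq m = 0) ∧
        (∀ j k : ℕ, j + k ≤ 2 * M →
          avg (subst2 (Sq (q + Δq)) (minus l φ) φ) j k = oneF j k)) →
      ∀ N : ℕ, N < M →
        (∀ j k : ℕ, j + k ≤ 2 * N →
          avg (subst2 (Sq q) (minus l φ) φ) j k = oneF j k) →
        ∀ m : ℕ, m ≤ 2 * N → Δq m = 0) :=
  truncated_outer_equation_general l hl hru q hq0 hqe hq2 φ hφ M

end Treschev

end
end

section
/- Let q ∈ ℂ[[t]] with q(0) = 1 and let φ = z + z̄ + O₃ be a normalized formal power series. Define κ = ∂₁₂S_q(φ⁻,φ)·( λ⁻¹·φ_z⁻·φ_z̄ − λ·φ_z̄⁻·φ_z ). Then κ − [κ] = Ẽ( ∂_z(ℰ(q,φ))·φ_z̄ − ∂_z̄(ℰ(q,φ))·φ_z ); in particular ∂_z(ℰ(q,φ))·φ_z̄ − ∂_z̄(ℰ(q,φ))·φ_z = κ − κ⁺. -/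
/- Common setup: formal power series in two commuting variables `z, z̄` over `ℂ`,
represented by their coefficient functions, together with the operators of
Treschev's linearizable billiard construction. -/

open scoped BigOperators

noncomputable section

namespace Treschev

/-! Write `J(f, g) = f_z g_z̄ − f_z̄ g_z`. The formal chain rule gives
`J(F(u, v), w) = F₁(u, v) J(u, w) + F₂(u, v) J(v, w)`, and `J(φ, φ) = 0`, so in `J(ℰ(q, φ), φ)`
the terms with `∂₁₁S_q` and `∂₂₂S_q` cancel, leaving
`∂₁₂S_q(φ⁻, φ) J(φ⁻, φ) + ∂₁₂S_q(φ, φ⁺) J(φ⁺, φ)`. The first term is `κ`. Since `f ↦ f⁺` is the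
ring automorphism `(z, z̄) ↦ (λz, λ⁻¹z̄)`, one has `J(f, g)⁺ = J(f⁺, g⁺)`, so
`κ⁺ = ∂₁₂S_q(φ, φ⁺) J(φ, φ⁺)` is minus the second term. Finally `Ẽ` inverts `f ↦ f − f⁺` off the
diagonal because `λ^(j−k) ≠ 1` for `j ≠ k`. -/

open PowerSeries

variable {l : ℂ}

/- `FPS` carries the pointwise ring structure of a function type, so the ring of formal power
series, in which `fmul` is the product, is reached through this equivalence. -/
def toSeries : FPS ≃ₗ[ℂ] ℂ⟦X⟧⟦X⟧ where
  toFun f := mk fun j => mk (f j)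
  invFun F j k := coeff k (coeff j F)
  left_inv f := by simp
  right_inv F := by ext; simp
  map_add' f g := by ext; simp
  map_smul' c f := by ext; simp

lemma coeff_coeff_toSeries (f : FPS) (j k : ℕ) : coeff k (coeff j (toSeries f)) = f j k := by
  simp [toSeries]

lemma toSeries_smul_eq_C_mul (c : ℂ) (f : FPS) : toSeries (c • f) = C (C c) * toSeries f := by
  ext j k
  simp [coeff_coeff_toSeries]

lemma toSeries_fmul (f g : FPS) : toSeries (fmul f g) = toSeries f * toSeries g := by
  ext j k
  rw [coeff_coeff_toSeries, coeff_mul, map_sum, Finset.Nat.sum_antidiagonal_eq_sum_range_succ_mk,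
    fmul]
  refine Finset.sum_congr rfl fun a _ => ?_
  rw [coeff_mul, Finset.Nat.sum_antidiagonal_eq_sum_range_succ_mk]
  simp [coeff_coeff_toSeries]

lemma toSeries_oneF : toSeries oneF = 1 := by
  ext j k
  rw [coeff_coeff_toSeries, coeff_one]
  split_ifs <;> simp_all [oneF]

lemma toSeries_fpow (f : FPS) (n : ℕ) : toSeries (fpow f n) = toSeries f ^ n := by
  induction n with
  | zero => exact toSeries_oneF
  | succ n ih => rw [fpow, toSeries_fmul, ih, pow_succ']

lemma toSeries_d1 (f : FPS) : toSeries (d1 f) = d⁄dX ℂ⟦X⟧ (toSeries f) := by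
  ext j k
  rw [coeff_derivative, show ((j : ℂ⟦X⟧) + 1) = C ((j : ℂ) + 1) by simp, coeff_mul_C,
    coeff_coeff_toSeries, coeff_coeff_toSeries, d1]
  push_cast; ring

/- `f ↦ f⁺` is the substitution `(z, z̄) ↦ (λz, λ⁻¹z̄)`, hence a ring endomorphism. -/
lemma toSeries_plus (hl : l ≠ 0) (f : FPS) :
    toSeries (plus l f) = rescale (C l) (map (rescale l⁻¹) (toSeries f)) := by
  ext j k
  simp [coeff_coeff_toSeries, plus, coeff_rescale, ← map_pow, zpow_sub₀ hl, div_eq_mul_inv]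
  ring

def subst2Poly (F u v : FPS) (M N : ℕ) : FPS :=
  ∑ m ∈ Finset.range M, ∑ n ∈ Finset.range N, F m n • fmul (fpow u m) (fpow v n)

lemma toSeries_subst2Poly (F u v : FPS) (M N : ℕ) :
    toSeries (subst2Poly F u v M N) = ∑ m ∈ Finset.range M, ∑ n ∈ Finset.range N,
      C (C (F m n)) * (toSeries u ^ m * toSeries v ^ n) := by
  simp only [subst2Poly, map_sum, toSeries_smul_eq_C_mul, toSeries_fmul, toSeries_fpow]

lemma d1_subst2Poly (F u v : FPS) (M N : ℕ) :
    d1 (subst2Poly F u v (M + 1) (N + 1)) =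
      fmul (subst2Poly (d1 F) u v M (N + 1)) (d1 u) +
        fmul (subst2Poly (d2 F) u v (M + 1) N) (d1 v) := by
  apply toSeries.injective
  simp only [toSeries_d1, toSeries_subst2Poly, map_add, toSeries_fmul, map_sum, Derivation.leibniz,
    derivative_pow, derivative_C, smul_eq_mul, mul_zero, add_zero, Finset.sum_mul, mul_add,
    Finset.sum_add_distrib]
  rw [add_comm]
  refine congrArg₂ (· + ·) ?_ ?_
  · rw [Finset.sum_range_succ']
    simp only [Nat.cast_zero, zero_mul, mul_zero, add_zero, Finset.sum_const_zero]
    refine Finset.sum_congr rfl fun m _ => Finset.sum_congr rfl fun n _ => ?_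
    simp only [d1, map_mul, map_natCast, Nat.add_sub_cancel]
    push_cast
    ring
  · refine Finset.sum_congr rfl fun m _ => ?_
    rw [Finset.sum_range_succ']
    simp only [Nat.cast_zero, zero_mul, mul_zero, add_zero]
    refine Finset.sum_congr rfl fun n _ => ?_
    simp only [d2, map_mul, map_natCast, Nat.add_sub_cancel]
    push_cast
    ring

def VanishesBelow (N : ℕ) (f : FPS) : Prop := ∀ j k, j + k < N → f j k = 0

lemma VanishesBelow.fmul {M N : ℕ} {f g : FPS} (hf : VanishesBelow M f) (hg : VanishesBelow N g) :
    VanishesBelow (M + N) (fmul f g) := by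
  intro j k h
  refine Finset.sum_eq_zero fun a ha => Finset.sum_eq_zero fun b hb => ?_
  rw [Finset.mem_range] at ha hb
  rcases lt_or_ge (a + b) M with hab | hab
  · rw [hf a b hab, zero_mul]
  · rw [hg (j - a) (k - b) (by omega), mul_zero]

lemma VanishesBelow.fpow {u : FPS} (hu : VanishesBelow 1 u) (m : ℕ) :
    VanishesBelow m (fpow u m) := by
  induction m with
  | zero => intro j k h; omega
  | succ m ih =>
    have h := hu.fmul ih
    rw [Nat.add_comm 1 m] at h
    exact h

lemma vanishesBelow_one_iff {u : FPS} : VanishesBelow 1 u ↔ u 0 0 = 0 :=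
  ⟨fun h => h 0 0 one_pos, fun h j k hjk => by
    obtain ⟨rfl, rfl⟩ : j = 0 ∧ k = 0 := by omega
    exact h⟩

lemma subst2_eq_subst2Poly {u v : FPS} (hu : u 0 0 = 0) (hv : v 0 0 = 0) (F : FPS)
    {j k M N : ℕ} (hM : j + k < M) (hN : j + k < N) :
    subst2 F u v j k = subst2Poly F u v M N j k := by
  simp only [subst2, subst2Poly, Finset.sum_apply, Pi.smul_apply, smul_eq_mul,
    ← Finset.sum_product']
  refine Finset.sum_subset (Finset.product_subset_product (Finset.range_subset_range.mpr hM)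
    (Finset.range_subset_range.mpr hN)) fun p hp hnp => ?_
  simp only [Finset.mem_product, Finset.mem_range] at hp hnp
  rw [((vanishesBelow_one_iff.mpr hu).fpow p.1).fmul ((vanishesBelow_one_iff.mpr hv).fpow p.2)
    j k (by omega), mul_zero]

lemma fmul_apply_congr_left {f f' : FPS} (g : FPS) {j k : ℕ}
    (h : ∀ a b, a ≤ j → b ≤ k → f a b = f' a b) : fmul f g j k = fmul f' g j k :=
  Finset.sum_congr rfl fun a ha => Finset.sum_congr rfl fun b hb => by
    rw [h a b (Nat.lt_succ_iff.mp (Finset.mem_range.mp ha))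
      (Nat.lt_succ_iff.mp (Finset.mem_range.mp hb))]

/- The coefficient `(j, k)` of `∂_z F(u, v)` only sees the terms of `F` of degree `≤ j + k + 1`,
and for a polynomial `F` the chain rule is the Leibniz rule. -/
lemma d1_subst2 {u v : FPS} (hu : u 0 0 = 0) (hv : v 0 0 = 0) (F : FPS) :
    d1 (subst2 F u v) = fmul (subst2 (d1 F) u v) (d1 u) + fmul (subst2 (d2 F) u v) (d1 v) := by
  funext j k
  have hpoly (G g : FPS) (M N : ℕ) (hM : j + k < M) (hN : j + k < N) :
      fmul (subst2 G u v) g j k = fmul (subst2Poly G u v M N) g j k :=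
    fmul_apply_congr_left g fun a b ha hb => subst2_eq_subst2Poly hu hv G (by omega) (by omega)
  calc d1 (subst2 F u v) j k = d1 (subst2Poly F u v (j + k + 2) (j + k + 2)) j k := by
        simp only [d1]
        rw [subst2_eq_subst2Poly hu hv F (M := j + k + 2) (N := j + k + 2) (by omega) (by omega)]
    _ = _ := by
        rw [d1_subst2Poly]
        simp only [Pi.add_apply]
        rw [hpoly (d1 F) _ (j + k + 1) (j + k + 2) (by omega) (by omega),
          hpoly (d2 F) _ (j + k + 2) (j + k + 1) (by omega) (by omega)]

lemma swapI_fmul (f g : FPS) : swapI (fmul f g) = fmul (swapI f) (swapI g) := by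
  funext j k
  simp only [swapI, fmul]
  exact Finset.sum_comm

lemma swapI_fpow (f : FPS) (n : ℕ) : swapI (fpow f n) = fpow (swapI f) n := by
  induction n with
  | zero => funext j k; simp [swapI, fpow, oneF, and_comm]
  | succ n ih => rw [fpow, fpow, swapI_fmul, ih]

lemma swapI_subst2 (F u v : FPS) : swapI (subst2 F u v) = subst2 F (swapI u) (swapI v) := by
  funext j k
  simp only [swapI, subst2, Nat.add_comm k j, ← swapI_fpow, ← swapI_fmul]

lemma swapI_add (f g : FPS) : swapI (f + g) = swapI f + swapI g := rfl

lemma d2_subst2 {u v : FPS} (hu : u 0 0 = 0) (hv : v 0 0 = 0) (F : FPS) :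
    d2 (subst2 F u v) = fmul (subst2 (d1 F) u v) (d2 u) + fmul (subst2 (d2 F) u v) (d2 v) := by
  calc d2 (subst2 F u v) = swapI (d1 (subst2 F (swapI u) (swapI v))) := by
        rw [← swapI_subst2]; rfl -- `d2 = swapI ∘ d1 ∘ swapI` definitionally
    _ = swapI (fmul (subst2 (d1 F) (swapI u) (swapI v)) (d1 (swapI u))
          + fmul (subst2 (d2 F) (swapI u) (swapI v)) (d1 (swapI v))) := by
        rw [d1_subst2 (u := swapI u) (v := swapI v) hu hv]
    _ = _ := by
        rw [swapI_add, swapI_fmul, swapI_fmul, swapI_subst2, swapI_subst2]; rfl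

lemma d1_d2 (f : FPS) : d1 (d2 f) = d2 (d1 f) := by
  funext j k
  simp only [d1, d2]
  ring

lemma d1_add (f g : FPS) : d1 (f + g) = d1 f + d1 g := by
  funext j k
  simp only [d1, Pi.add_apply, mul_add]

lemma d2_add (f g : FPS) : d2 (f + g) = d2 f + d2 g := by
  funext j k
  simp only [d2, Pi.add_apply, mul_add]

lemma plus_fmul (hl : l ≠ 0) (f g : FPS) : plus l (fmul f g) = fmul (plus l f) (plus l g) := by
  apply toSeries.injective
  simp only [toSeries_plus hl, toSeries_fmul, map_mul]

lemma plus_fpow (hl : l ≠ 0) (f : FPS) (n : ℕ) : plus l (fpow f n) = fpow (plus l f) n := by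
  apply toSeries.injective
  simp only [toSeries_plus hl, toSeries_fpow, map_pow]

lemma plus_subst2 (hl : l ≠ 0) (F u v : FPS) :
    plus l (subst2 F u v) = subst2 F (plus l u) (plus l v) := by
  funext j k
  show l ^ ((j : ℤ) - k) * subst2 F u v j k = _
  simp only [subst2, Finset.mul_sum, ← plus_fpow hl, ← plus_fmul hl]
  simp only [plus, mul_left_comm]

lemma plus_sub (f g : FPS) : plus l (f - g) = plus l f - plus l g := by
  funext j k
  simp only [plus, Pi.sub_apply, mul_sub]

lemma plus_minus (hl : l ≠ 0) (f : FPS) : plus l (minus l f) = f := by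
  funext j k
  simp only [plus, minus, ← mul_assoc, ← zpow_add₀ hl, sub_add_sub_cancel, sub_self,
    zpow_zero, one_mul]

lemma minus_eq_plus_inv (f : FPS) : minus l f = plus l⁻¹ f := by
  funext j k
  simp only [minus, plus, inv_zpow', neg_sub]

lemma d1_plus (hl : l ≠ 0) (f : FPS) : d1 (plus l f) = l • plus l (d1 f) := by
  funext j k
  simp only [d1, plus, Pi.smul_apply, smul_eq_mul, Nat.cast_add, Nat.cast_one]
  rw [add_sub_right_comm, zpow_add_one₀ hl]
  ring

lemma d2_plus (hl : l ≠ 0) (f : FPS) : d2 (plus l f) = l⁻¹ • plus l (d2 f) := by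
  funext j k
  simp only [d2, plus, Pi.smul_apply, smul_eq_mul, Nat.cast_add, Nat.cast_one]
  rw [sub_add_eq_sub_sub, zpow_sub_one₀ hl]
  ring

lemma d1_minus (hl : l ≠ 0) (f : FPS) : d1 (minus l f) = l⁻¹ • minus l (d1 f) := by
  rw [minus_eq_plus_inv, minus_eq_plus_inv, d1_plus (inv_ne_zero hl)]

lemma d2_minus (hl : l ≠ 0) (f : FPS) : d2 (minus l f) = l • minus l (d2 f) := by
  rw [minus_eq_plus_inv, minus_eq_plus_inv, d2_plus (inv_ne_zero hl), inv_inv]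

def jac (f g : FPS) : FPS := fmul (d1 f) (d2 g) - fmul (d2 f) (d1 g)

lemma jac_add_left (f g h : FPS) : jac (f + g) h = jac f h + jac g h := by
  apply toSeries.injective
  simp only [jac, d1_add, d2_add, map_add, map_sub, toSeries_fmul]
  ring

lemma jac_antisymm (f g : FPS) : jac g f = -jac f g := by
  apply toSeries.injective
  simp only [jac, map_neg, map_sub, toSeries_fmul]
  ring

lemma jac_self (f : FPS) : jac f f = 0 := by
  apply toSeries.injective
  simp only [jac, map_sub, map_zero, toSeries_fmul]
  ring

lemma jac_subst2 {u v : FPS} (hu : u 0 0 = 0) (hv : v 0 0 = 0) (F w : FPS) :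
    jac (subst2 F u v) w =
      fmul (subst2 (d1 F) u v) (jac u w) + fmul (subst2 (d2 F) u v) (jac v w) := by
  apply toSeries.injective
  simp only [jac, d1_subst2 hu hv, d2_subst2 hu hv, map_add, map_sub, toSeries_fmul]
  ring

lemma plus_jac (hl : l ≠ 0) (f g : FPS) : plus l (jac f g) = jac (plus l f) (plus l g) := by
  apply toSeries.injective
  simp only [jac, plus_sub, plus_fmul hl, d1_plus hl, d2_plus hl, map_sub, toSeries_fmul,
    toSeries_smul_eq_C_mul]
  have hC : C (C l) * C (C l⁻¹) = 1 := by
    rw [← map_mul, ← map_mul, mul_inv_cancel₀ hl, map_one, map_one]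
  linear_combination (toSeries (plus l (d2 f)) * toSeries (plus l (d1 g))
    - toSeries (plus l (d1 f)) * toSeries (plus l (d2 g))) * hC

lemma jac_minus (hl : l ≠ 0) (f g : FPS) :
    jac (minus l f) g =
      l⁻¹ • fmul (minus l (d1 f)) (d2 g) - l • fmul (minus l (d2 f)) (d1 g) := by
  apply toSeries.injective
  simp only [jac, d1_minus hl, d2_minus hl, map_sub, toSeries_fmul, toSeries_smul_eq_C_mul]
  ring

lemma jac_Err_eq_kappa_sub_plus (hl : l ≠ 0) (q : OPS) {φ : FPS} (hφ : φ 0 0 = 0) :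
    jac (Err l q φ) φ = kappaFun l q φ - plus l (kappaFun l q φ) := by
  have hm : minus l φ 0 0 = 0 := by simp [minus, hφ]
  have hp : plus l φ 0 0 = 0 := by simp [plus, hφ]
  have hκ : kappaFun l q φ =
      fmul (subst2 (d1 (d2 (Sq q))) (minus l φ) φ) (jac (minus l φ) φ) := by
    rw [jac_minus hl]; rfl
  have hκ_plus : plus l (kappaFun l q φ) =
      fmul (subst2 (d1 (d2 (Sq q))) φ (plus l φ)) (jac φ (plus l φ)) := by
    rw [hκ, plus_fmul hl, plus_subst2 hl, plus_jac hl, plus_minus hl]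
  rw [Err, jac_add_left, jac_subst2 hm hφ, jac_subst2 hφ hp, jac_self, ← d1_d2, hκ_plus, hκ,
    jac_antisymm φ (plus l φ)]
  apply toSeries.injective
  simp only [map_add, map_sub, map_neg, map_zero, toSeries_fmul]
  ring

lemma zpow_ne_one_of_ne_zero (hru : ∀ n : ℕ, 0 < n → l ^ n ≠ 1) {e : ℤ} (he : e ≠ 0) :
    l ^ e ≠ 1 := by
  cases e with
  | ofNat n => simpa using hru n (Nat.pos_of_ne_zero fun hn => he (by rw [hn]; rfl))
  | negSucc n => simpa using hru (n + 1) n.succ_pos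

lemma Etilde_sub_plus (hru : ∀ n : ℕ, 0 < n → l ^ n ≠ 1) (f : FPS) :
    Etilde l (f - plus l f) = f - avg f := by
  funext j k
  by_cases hjk : j = k
  · simp [Etilde, avg, hjk]
  · have hne : 1 - l ^ ((j : ℤ) - k) ≠ 0 :=
      sub_ne_zero.mpr (zpow_ne_one_of_ne_zero hru (by omega)).symm
    simp only [Etilde, avg, plus, Pi.sub_apply, hjk, if_false, sub_zero]
    field_simp

theorem kappa_identity_general
    (l : ℂ) (hl : ‖l‖ = 1) (hru : ∀ n : ℕ, 0 < n → l ^ n ≠ 1)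
    (q : OPS) (φ : FPS) (hφ : normalized φ) :
    kappaFun l q φ - avg (kappaFun l q φ) =
      Etilde l (fmul (d1 (Err l q φ)) (d2 φ) - fmul (d2 (Err l q φ)) (d1 φ)) ∧
    fmul (d1 (Err l q φ)) (d2 φ) - fmul (d2 (Err l q φ)) (d1 φ) =
      kappaFun l q φ - plus l (kappaFun l q φ) := by
  have hl0 : l ≠ 0 := norm_ne_zero_iff.mp (by rw [hl]; exact one_ne_zero)
  have hjac : jac (Err l q φ) φ = kappaFun l q φ - plus l (kappaFun l q φ) :=
    jac_Err_eq_kappa_sub_plus hl0 q hφ.1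
  exact ⟨by rw [← Etilde_sub_plus hru, ← hjac]; rfl, hjac⟩

/-- With `κ = ∂₁₂S_q(φ⁻,φ)·(λ⁻¹φ_z⁻φ_z̄ − λφ_z̄⁻φ_z)`:
`κ − [κ] = Ẽ(∂_z(ℰ)·φ_z̄ − ∂_z̄(ℰ)·φ_z)` and `∂_z(ℰ)·φ_z̄ − ∂_z̄(ℰ)·φ_z = κ − κ⁺`. -/
theorem kappa_identity
    (l : ℂ) (hl : ‖l‖ = 1) (hru : ∀ n : ℕ, 0 < n → l ^ n ≠ 1)
    (q : OPS) (hq0 : q 0 = 1) (φ : FPS) (hφ : normalized φ) :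
    kappaFun l q φ - avg (kappaFun l q φ) =
      Etilde l (fmul (d1 (Err l q φ)) (d2 φ) - fmul (d2 (Err l q φ)) (d1 φ)) ∧
    fmul (d1 (Err l q φ)) (d2 φ) - fmul (d2 (Err l q φ)) (d1 φ) =
      kappaFun l q φ - plus l (kappaFun l q φ) :=
  kappa_identity_general l hl hru q φ hφ

end Treschev

end
end
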